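/- Let G be a strongly connected digraph with start vertex s, and let x and y be vertices with nearest common ancestor w in the loop nesting tree H and w^R in H^R. A strong articulation point u is a separating vertex for x and y if and only if (1) u is an ancestor of x or of y in the dominator tree D and w is not a proper descendant of u in D, or (2) u is an ancestor of x or of y in D^R and w^R is not a proper descendant of u in D^R. -/

import Mathlib

namespace StrongConn

variable {V : Type*}

/-- `p` is a walk in the digraph `G` from `u` to `v`, recorded as the list of visited vertices. -/
def IsWalk (G : V → V → Prop) (u v : V) (p : List V) : Prop :=
  p.Chain' G ∧ p.head? = some u ∧ p.getLast? = some v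

/-- The directed edge `(a,b)` occurs on the walk `p`. -/
def EdgeOn (a b : V) (p : List V) : Prop := (a, b) ∈ p.zip p.tail

/-- `v` is reachable from `u` in `G`. -/
def Reach (G : V → V → Prop) (u v : V) : Prop := ∃ p, IsWalk G u v p

/-- `u` and `v` are strongly connected in `G`. -/
def SConn (G : V → V → Prop) (u v : V) : Prop := Reach G u v ∧ Reach G v u

def StronglyConnected (G : V → V → Prop) : Prop := ∀ u v, Reach G u v

/-- `G` with the edge `(a,b)` deleted. -/
def DelEdge (G : V → V → Prop) (a b : V) : V → V → Prop :=
  fun x y => G x y ∧ ¬(x = a ∧ y = b)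

/-- `G` with the vertex `u` (and all incident edges) deleted. -/
def DelVertex (G : V → V → Prop) (u : V) : V → V → Prop :=
  fun x y => G x y ∧ x ≠ u ∧ y ≠ u

/-- `C` is a strongly connected component of `G`. -/
def IsSCC (G : V → V → Prop) (C : Set V) : Prop :=
  C.Nonempty ∧ (∀ x ∈ C, ∀ y ∈ C, SConn G x y) ∧ ∀ x ∈ C, ∀ y, SConn G x y → y ∈ C

/-- `(a,b)` is a strong bridge: an edge whose removal increases the number of
strongly connected components, i.e. it separates some strongly connected pair. -/
def IsStrongBridge (G : V → V → Prop) (a b : V) : Prop :=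
  G a b ∧ ∃ x y, SConn G x y ∧ ¬ SConn (DelEdge G a b) x y

/-- `u` is a strong articulation point: removing it increases the number of strongly
connected components, i.e. it separates some strongly connected pair of other vertices. -/
def IsStrongArticulationPoint (G : V → V → Prop) (u : V) : Prop :=
  ∃ x y, x ≠ u ∧ y ≠ u ∧ SConn G x y ∧ ¬ SConn (DelVertex G u) x y

/-- The reverse digraph. -/
def Rev (G : V → V → Prop) : V → V → Prop := fun x y => G y x

/-- `u` dominates `v` in the flow graph `G_s`; equivalently, `u` is an ancestor of `v`
(and `v` a descendant of `u`) in the dominator tree of `G_s`. -/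
def Dom (G : V → V → Prop) (s u v : V) : Prop :=
  ∀ p, IsWalk G s v p → u ∈ p

/-- `u` is the immediate dominator of `v` in `G_s` (the parent of `v` in the dominator tree). -/
def Idom (G : V → V → Prop) (s u v : V) : Prop :=
  u ≠ v ∧ Dom G s u v ∧ ∀ w, w ≠ v → Dom G s w v → Dom G s w u

/-- Edge `(a,b)` is a bridge of the flow graph `G_s`: every walk from `s` to `b` uses it. -/
def IsBridge (G : V → V → Prop) (s a b : V) : Prop :=
  G a b ∧ ∀ p, IsWalk G s b p → EdgeOn a b p

/-- `r` is the head of some bridge of `G_s`, i.e. a non-`s` root in the bridge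
decomposition of the dominator tree. -/
def IsBridgeHead (G : V → V → Prop) (s r : V) : Prop :=
  ∃ a, IsBridge G s a r

/-- `r` is the root of the tree containing `x` in the bridge decomposition of the
dominator tree of `G_s`: `r` dominates `x`, `r` is `s` or a bridge head, and every
bridge head dominating `x` dominates `r`. -/
def IsBDRoot (G : V → V → Prop) (s r x : V) : Prop :=
  Dom G s r x ∧ (r = s ∨ IsBridgeHead G s r) ∧
    ∀ z, Dom G s z x → IsBridgeHead G s z → Dom G s z r

/-- A depth-first search tree of `G` rooted at `s`, given by a parent function and a
preorder numbering. -/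
structure DFSTree (G : V → V → Prop) (s : V) where
  parent : V → V
  pre : V → ℕ
  parent_root : parent s = s
  parent_edge : ∀ v, v ≠ s → G (parent v) v
  root_reach : ∀ v, ∃ n, parent^[n] v = s
  pre_inj : Function.Injective pre
  pre_parent : ∀ v, v ≠ s → pre (parent v) < pre v
  /-- Descendants of a vertex form a contiguous interval in preorder. -/
  interval : ∀ u v w, (∃ n, parent^[n] w = u) → pre u ≤ pre v → pre v ≤ pre w →
      ∃ n, parent^[n] v = u
  /-- The defining property of depth-first search trees: every edge going forward
  in preorder goes to a descendant. -/
  dfs_edge : ∀ u v, G u v → pre u < pre v → ∃ n, parent^[n] v = u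

/-- `u` is an ancestor of `v` in the tree `T` (every vertex is an ancestor of itself). -/
def DFSTree.Anc {G : V → V → Prop} {s : V} (T : DFSTree G s) (u v : V) : Prop :=
  ∃ n, T.parent^[n] v = u

/-- `x ∈ loop(u)` with respect to the tree-ancestor relation `tanc`: `x` is a descendant
of `u` and there is a walk from `x` to `u` using only descendants of `u`. -/
def InLoop (G : V → V → Prop) (tanc : V → V → Prop) (u x : V) : Prop :=
  tanc u x ∧ ∃ p, IsWalk G x u p ∧ ∀ y ∈ p, tanc u y

/-- `hp` is the parent function of the loop nesting tree of `G_s` with respect to the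
DFS-tree ancestor relation `tanc`: `hp x` is the nearest proper ancestor `u` of `x`
in the DFS tree with `x ∈ loop(u)`. -/
def IsLoopParent (G : V → V → Prop) (s : V) (tanc : V → V → Prop) (hp : V → V) : Prop :=
  hp s = s ∧ ∀ x, x ≠ s →
    (tanc (hp x) x ∧ hp x ≠ x ∧ InLoop G tanc (hp x) x ∧
      ∀ u, tanc u x → u ≠ x → InLoop G tanc u x → tanc u (hp x))

/-- `u` is an ancestor of `v` in the loop nesting tree with parent function `hp`. -/
def HAnc (hp : V → V) (u v : V) : Prop := ∃ n, hp^[n] v = u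

/-- `w` is the nearest common ancestor of `x` and `y` in the loop nesting tree
with parent function `hp`. -/
def HNca (hp : V → V) (x y w : V) : Prop :=
  HAnc hp w x ∧ HAnc hp w y ∧ ∀ z, HAnc hp z x → HAnc hp z y → HAnc hp z w

/-- `u` is a nontrivial dominator of `G_s`: `u ≠ s` and `u` is not a leaf of the
dominator tree (it properly dominates some vertex). -/
def NontrivialDom (G : V → V → Prop) (s u : V) : Prop :=
  u ≠ s ∧ ∃ w, w ≠ u ∧ Dom G s u w

/-- `a` and `b` are siblings in the dominator tree of `G_s`. -/
def SiblingInD (G : V → V → Prop) (s a b : V) : Prop :=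
  a ≠ b ∧ ∃ w, Idom G s w a ∧ Idom G s w b

/-- Given the bridge-decomposition root function `r` and loop-nesting parent `hp`,
`z` is a boundary vertex. -/
def Boundary (s : V) (r hp : V → V) (z : V) : Prop := z = s ∨ r (hp z) ≠ r z

/-- `z` is the nearest boundary ancestor of `x` in the loop nesting tree. -/
def IsNearestBoundary (s : V) (r hp : V → V) (x z : V) : Prop :=
  HAnc hp z x ∧ Boundary s r hp z ∧
    ∀ z', HAnc hp z' x → Boundary s r hp z' → HAnc hp z' z

/-- `x` and `y` are 2-edge-connected: no single edge deletion leaves them in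
different strongly connected components. -/
def TwoEdgeConnected (G : V → V → Prop) (x y : V) : Prop :=
  ∀ a b, G a b → SConn (DelEdge G a b) x y

/-! If `x` and `y` stay strongly connected in `G \ u`, let `m` be the vertex of their strongly
connected component in `G \ u` with smallest preorder number. By the defining property of
depth-first search the whole component lies below `m` in the DFS tree, so `x` and `y` lie in
`loop(m)`; hence `m` is an ancestor of `x`, `y` and their nearest common ancestor `w` in the loop
nesting tree, and a walk `w → m → x` avoiding `u` shows that `u` dominates `w` whenever it
dominates `x`. Conversely, if `u` properly dominates `w`, then `x`, `y` and `w` are strongly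
connected through descendants of `w` in the DFS tree, none of which is `u`. If `u` dominates none
of `x`, `y` in `G_s` nor in `G_s^R`, both vertices reach `s` and are reached from `s` in `G \ u`. -/

open Relation

/-- `DelVertex G u` is `Restrict G (· ≠ u)` by definition. -/
def Restrict (G : V → V → Prop) (P : V → Prop) : V → V → Prop :=
  fun a b => G a b ∧ P a ∧ P b

section Walks

variable {G : V → V → Prop} {P Q : V → Prop} {s u a b : V}

theorem exists_walk_iff_reflTransGen (ha : P a) :
    (∃ p, IsWalk G a b p ∧ ∀ z ∈ p, P z) ↔ ReflTransGen (Restrict G P) a b := by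
  constructor
  · rintro ⟨p, ⟨hchain, hhead, hlast⟩, hP⟩
    have hne : p ≠ [] := by rintro rfl; simp at hhead
    have h := List.relationReflTransGen_of_exists_isChain p
      (hchain.imp_of_mem_imp (S := Restrict G P) fun x y hx hy hxy => ⟨hxy, hP x hx, hP y hy⟩)
      hne
    rw [List.head?_eq_some_head hne, Option.some.injEq] at hhead
    rw [List.getLast?_eq_some_getLast hne, Option.some.injEq] at hlast
    rwa [hhead, hlast] at h
  · intro h
    obtain ⟨l, hchain, hlast⟩ := List.exists_isChain_cons_of_relationReflTransGen h
    refine ⟨a :: l, ⟨hchain.imp fun _ _ e => e.1, rfl, ?_⟩, ?_⟩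
    · rw [List.getLast?_eq_some_getLast (List.cons_ne_nil a l), hlast]
    · exact hchain.induction P _ (fun _ _ e _ => e.2.2) fun _ => ha

theorem reflTransGen_restrict_mono (hPQ : ∀ z, P z → Q z)
    (h : ReflTransGen (Restrict G P) a b) : ReflTransGen (Restrict G Q) a b :=
  ReflTransGen.mono (fun _ _ e => ⟨e.1, hPQ _ e.2.1, hPQ _ e.2.2⟩) _ _ h

theorem reach_iff_reflTransGen : Reach G a b ↔ ReflTransGen G a b := by
  have hG : Restrict G (fun _ => True) = G := by
    funext c d
    simp only [Restrict, and_true]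
  simpa [Reach, hG] using exists_walk_iff_reflTransGen (G := G) (b := b) (P := fun _ => True) trivial

theorem sConn_iff : SConn G a b ↔ ReflTransGen G a b ∧ ReflTransGen G b a := by
  rw [SConn, reach_iff_reflTransGen, reach_iff_reflTransGen]

theorem SConn.symm (h : SConn G a b) : SConn G b a := ⟨h.2, h.1⟩

theorem ne_of_reflTransGen_delVertex (h : ReflTransGen (DelVertex G u) a b) (ha : a ≠ u) :
    b ≠ u := by
  induction h with
  | refl => exact ha
  | tail _ e => exact e.2.2

theorem reflTransGen_delVertex_rev :
    ReflTransGen (DelVertex (Rev G) u) a b ↔ ReflTransGen (DelVertex G u) b a := by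
  have h : Function.swap (DelVertex (Rev G) u) = DelVertex G u := by
    funext c d
    simp only [Function.swap, DelVertex, Rev]
    exact propext (by tauto)
  rw [← reflTransGen_swap, h]

theorem sConn_delVertex_rev : SConn (DelVertex (Rev G) u) a b ↔ SConn (DelVertex G u) a b := by
  rw [sConn_iff, sConn_iff, reflTransGen_delVertex_rev, reflTransGen_delVertex_rev, and_comm]

theorem reflTransGen_restrict_component {r : V → V → Prop} {x : V}
    (ha : ReflTransGen r x a ∧ ReflTransGen r a x) (hb : ReflTransGen r x b ∧ ReflTransGen r b x)
    (h : ReflTransGen r a b) :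
    ReflTransGen (Restrict r fun z => ReflTransGen r x z ∧ ReflTransGen r z x) a b := by
  induction h with
  | refl => exact .refl
  | @tail c d hac hcd ih =>
    have hc : ReflTransGen r x c ∧ ReflTransGen r c x := ⟨ha.1.trans hac, hb.2.head hcd⟩
    exact (ih hc).tail ⟨hcd, hc, hb⟩

end Walks

section Domination

variable {G : V → V → Prop} {s u a b : V}

theorem dom_start (v : V) : Dom G s s v := fun _ hp => List.mem_of_mem_head? hp.2.1

theorem not_dom_iff (hsu : s ≠ u) {v : V} :
    ¬Dom G s u v ↔ ReflTransGen (DelVertex G u) s v := by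
  change _ ↔ ReflTransGen (Restrict G (· ≠ u)) s v
  rw [← exists_walk_iff_reflTransGen (P := (· ≠ u)) hsu]
  simp only [Dom, not_forall, exists_prop]
  exact exists_congr fun p => and_congr_right fun _ => ⟨fun hu z hz hzu => hu (hzu ▸ hz),
    fun h hu => h u hu rfl⟩

theorem Dom.of_reflTransGen_delVertex (hb : Dom G s u b)
    (hab : ReflTransGen (DelVertex G u) a b) : Dom G s u a := by
  by_cases hsu : s = u
  · exact hsu ▸ dom_start a
  · by_contra ha
    exact (not_dom_iff hsu).mpr (((not_dom_iff hsu).mp ha).trans hab) hb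

end Domination

namespace DFSTree

variable {G : V → V → Prop} {s : V} (T : DFSTree G s) {a b m : V}

theorem anc_refl (v : V) : T.Anc v v := ⟨0, rfl⟩

theorem anc_trans (h₁ : T.Anc a b) (h₂ : T.Anc b m) : T.Anc a m := by
  obtain ⟨n, rfl⟩ := h₁
  obtain ⟨k, rfl⟩ := h₂
  exact ⟨n + k, Function.iterate_add_apply _ _ _ _⟩

theorem pre_parent_le (v : V) : T.pre (T.parent v) ≤ T.pre v := by
  by_cases hv : v = s
  · rw [hv, T.parent_root]
  · exact (T.pre_parent v hv).le

theorem pre_le_of_anc (h : T.Anc a b) : T.pre a ≤ T.pre b := by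
  obtain ⟨n, hn⟩ := h
  induction n generalizing b with
  | zero => exact (congrArg T.pre hn).ge
  | succ n ih => exact (ih hn).trans (T.pre_parent_le b)

theorem anc_antisymm (h₁ : T.Anc a b) (h₂ : T.Anc b a) : a = b :=
  T.pre_inj ((T.pre_le_of_anc h₁).antisymm (T.pre_le_of_anc h₂))

theorem reflTransGen_of_anc (h : T.Anc a b) :
    ReflTransGen (Restrict G fun z => T.Anc a z ∧ T.Anc z b) a b := by
  obtain ⟨n, hn⟩ := h
  induction n generalizing b with
  | zero =>
    subst hn
    exact .refl
  | succ n ih =>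
    rw [Function.iterate_succ_apply] at hn
    by_cases hb : b = s
    · subst hb
      rw [T.parent_root] at hn
      exact ih hn
    · refine ReflTransGen.tail (reflTransGen_restrict_mono ?_ (ih hn))
        ⟨T.parent_edge b hb, ⟨⟨n, hn⟩, ⟨1, rfl⟩⟩, ⟨⟨n + 1, hn⟩, T.anc_refl b⟩⟩
      exact fun z hz => ⟨hz.1, T.anc_trans hz.2 ⟨1, rfl⟩⟩

theorem anc_of_dom (h : Dom G s a b) : T.Anc a b := by
  by_contra hab
  have has : s ≠ a := by
    rintro rfl
    exact hab (T.root_reach b)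
  refine (not_dom_iff has).mpr ?_ h
  exact reflTransGen_restrict_mono (fun z hz hza => hab (hza ▸ hz.2))
    (T.reflTransGen_of_anc (T.root_reach b))

/-- Forward edges go to descendants (`dfs_edge`), and backward edges out of the subtree of `m`
would land before `m` in preorder (`interval`). -/
theorem anc_of_reflTransGen_pre_le
    (h : ReflTransGen (Restrict G fun z => T.pre m ≤ T.pre z) a b) (ha : T.Anc m a) :
    T.Anc m b := by
  induction h with
  | refl => exact ha
  | @tail c d _ hcd ih =>
    rcases lt_trichotomy (T.pre c) (T.pre d) with hlt | heq | hgt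
    · exact T.anc_trans ih (T.dfs_edge c d hcd.1 hlt)
    · exact T.pre_inj heq ▸ ih
    · exact T.interval m d c ih hcd.2.2 hgt.le

end DFSTree

section LoopNesting

variable {G : V → V → Prop} {s : V} {T : DFSTree G s} {hp : V → V} {a b m z : V}

theorem inLoop_iff {tanc : V → V → Prop} :
    InLoop G tanc a z ↔ tanc a z ∧ ReflTransGen (Restrict G (tanc a)) z a :=
  and_congr_right exists_walk_iff_reflTransGen

theorem InLoop.trans (h₁ : InLoop G T.Anc a b) (h₂ : InLoop G T.Anc b z) :
    InLoop G T.Anc a z := by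
  rw [inLoop_iff] at *
  exact ⟨T.anc_trans h₁.1 h₂.1,
    (reflTransGen_restrict_mono (fun _ => T.anc_trans h₁.1) h₂.2).trans h₁.2⟩

theorem InLoop.of_anc (h : InLoop G T.Anc m z) (hma : T.Anc m a) (haz : T.Anc a z) :
    InLoop G T.Anc m a := by
  rw [inLoop_iff] at *
  exact ⟨hma, (reflTransGen_restrict_mono (fun _ hy => T.anc_trans hma hy.1)
    (T.reflTransGen_of_anc haz)).trans h.2⟩

theorem IsLoopParent.inLoop_of_hAnc (hlp : IsLoopParent G s T.Anc hp) (h : HAnc hp m z) :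
    InLoop G T.Anc m z := by
  obtain ⟨n, hn⟩ := h
  induction n generalizing z with
  | zero =>
    subst hn
    exact inLoop_iff.mpr ⟨T.anc_refl z, .refl⟩
  | succ n ih =>
    rw [Function.iterate_succ_apply] at hn
    by_cases hz : z = s
    · subst hz
      rw [hlp.1] at hn
      exact ih hn
    · exact (ih hn).trans (hlp.2 z hz).2.2.1

theorem IsLoopParent.hAnc_of_inLoop (hlp : IsLoopParent G s T.Anc hp) {z : V}
    (h : InLoop G T.Anc m z) : HAnc hp m z := by
  by_cases hzm : z = m
  · exact ⟨0, hzm⟩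
  have hzs : z ≠ s := by
    rintro rfl
    exact hzm (T.anc_antisymm (T.root_reach m) h.1)
  obtain ⟨hanc, hne, -, hmax⟩ := hlp.2 z hzs
  have hlt : T.pre (hp z) < T.pre z :=
    (T.pre_le_of_anc hanc).lt_of_ne fun e => hne (T.pre_inj e)
  obtain ⟨k, hk⟩ := hlp.hAnc_of_inLoop (h.of_anc (hmax m h.1 (Ne.symm hzm) h) hanc)
  exact ⟨k + 1, by rw [Function.iterate_succ_apply, hk]⟩
termination_by T.pre z

end LoopNesting

section Separation

variable {G : V → V → Prop} {s : V} {T : DFSTree G s} {hp : V → V} {u x y w : V}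

theorem HNca.symm (h : HNca hp x y w) : HNca hp y x w :=
  ⟨h.2.1, h.1, fun z hx hy => h.2.2 z hy hx⟩

theorem sConn_delVertex_of_dom_hNca (hlp : IsLoopParent G s T.Anc hp)
    (hdom : Dom G s u w ∧ w ≠ u) (hw : HNca hp x y w) : SConn (DelVertex G u) x y := by
  have hbelow : ∀ z, T.Anc w z → z ≠ u := by
    rintro z hz rfl
    exact hdom.2 (T.anc_antisymm hz (T.anc_of_dom hdom.1))
  have hconn : ∀ v, HAnc hp w v →
      ReflTransGen (DelVertex G u) v w ∧ ReflTransGen (DelVertex G u) w v := by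
    intro v hv
    obtain ⟨hwv, hvw⟩ := inLoop_iff.mp (hlp.inLoop_of_hAnc hv)
    exact ⟨reflTransGen_restrict_mono hbelow hvw,
      reflTransGen_restrict_mono (fun z hz => hbelow z hz.1) (T.reflTransGen_of_anc hwv)⟩
  obtain ⟨hxw, hwx⟩ := hconn x hw.1
  obtain ⟨hyw, hwy⟩ := hconn y hw.2.1
  exact sConn_iff.mpr ⟨hxw.trans hwy, hyw.trans hwx⟩

theorem dom_hNca_of_sConn_delVertex_of_dom (hlp : IsLoopParent G s T.Anc hp) (hxu : x ≠ u)
    (hsc : SConn (DelVertex G u) x y) (hw : HNca hp x y w) (hdom : Dom G s u x) :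
    Dom G s u w ∧ w ≠ u := by
  obtain ⟨hxy, hyx⟩ := sConn_iff.mp hsc
  set C : V → Prop := fun z => ReflTransGen (DelVertex G u) x z ∧ ReflTransGen (DelVertex G u) z x
  have hxC : C x := ⟨.refl, .refl⟩
  obtain ⟨m, hmC, hmin⟩ := (InvImage.wf T.pre wellFounded_lt).has_min {z | C z} ⟨x, hxC⟩
  have hpath : ∀ {a b} {Q : V → Prop}, (∀ z, C z → Q z) → C a → C b →
      ReflTransGen (Restrict G Q) a b := fun hQ ha hb =>
    ReflTransGen.mono (fun _ _ e => ⟨e.1.1, hQ _ e.2.1, hQ _ e.2.2⟩) _ _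
      (reflTransGen_restrict_component ha hb (ha.2.trans hb.1))
  have hCm : ∀ z, C z → T.Anc m z := fun z hz =>
    T.anc_of_reflTransGen_pre_le (hpath (fun z hz => le_of_not_gt (hmin z hz)) hmC hz)
      (T.anc_refl m)
  have hCu : ∀ z, C z → z ≠ u := fun z hz => ne_of_reflTransGen_delVertex hz.1 hxu
  have hloop : ∀ z, C z → HAnc hp m z := fun z hz =>
    hlp.hAnc_of_inLoop (inLoop_iff.mpr ⟨hCm z hz, hpath hCm hz hmC⟩)
  obtain ⟨hmw, hwm⟩ := inLoop_iff.mp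
    (hlp.inLoop_of_hAnc (hw.2.2 m (hloop x hxC) (hloop y ⟨hxy, hyx⟩)))
  have hdm : Dom G s u m := hdom.of_reflTransGen_delVertex (hpath hCu hmC hxC)
  have hbelow : ∀ z, T.Anc m z → z ≠ u := by
    rintro z hz rfl
    exact hCu m hmC (T.anc_antisymm hz (T.anc_of_dom hdm))
  exact ⟨hdm.of_reflTransGen_delVertex (reflTransGen_restrict_mono hbelow hwm), hbelow w hmw⟩

theorem dom_hNca_of_sConn_delVertex (hlp : IsLoopParent G s T.Anc hp) (hxu : x ≠ u)
    (hyu : y ≠ u) (hsc : SConn (DelVertex G u) x y) (hw : HNca hp x y w)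
    (hdom : Dom G s u x ∨ Dom G s u y) : Dom G s u w ∧ w ≠ u := by
  rcases hdom with hdom | hdom
  · exact dom_hNca_of_sConn_delVertex_of_dom hlp hxu hsc hw hdom
  · exact dom_hNca_of_sConn_delVertex_of_dom hlp hyu hsc.symm hw.symm hdom

theorem sConn_delVertex_of_not_dom (hx : ¬Dom G s u x) (hy : ¬Dom G s u y)
    (hxR : ¬Dom (Rev G) s u x) (hyR : ¬Dom (Rev G) s u y) : SConn (DelVertex G u) x y := by
  have hsu : s ≠ u := by
    rintro rfl
    exact hx (dom_start x)
  rw [not_dom_iff hsu] at hx hy hxR hyR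
  rw [reflTransGen_delVertex_rev] at hxR hyR
  exact sConn_iff.mpr ⟨hxR.trans hy, hyR.trans hx⟩

end Separation

theorem stmt19_general (G : V → V → Prop) (s u x y : V)
    (hx : x ≠ u) (hy : y ≠ u)
    (T : DFSTree G s) (TR : DFSTree (Rev G) s)
    (hp hpR : V → V)
    (hlp : IsLoopParent G s T.Anc hp) (hlpR : IsLoopParent (Rev G) s TR.Anc hpR)
    (w wR : V) (hw : HNca hp x y w) (hwR : HNca hpR x y wR) :
    ¬ SConn (DelVertex G u) x y ↔
      ((Dom G s u x ∨ Dom G s u y) ∧ ¬ (Dom G s u w ∧ w ≠ u)) ∨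
        ((Dom (Rev G) s u x ∨ Dom (Rev G) s u y) ∧ ¬ (Dom (Rev G) s u wR ∧ wR ≠ u)) := by
  constructor
  · intro hsep
    by_contra hcond
    obtain ⟨hcondD, hcondDR⟩ := not_or.mp hcond
    by_cases hD : Dom G s u x ∨ Dom G s u y
    · exact hsep (sConn_delVertex_of_dom_hNca hlp (not_not.mp fun h => hcondD ⟨hD, h⟩) hw)
    by_cases hDR : Dom (Rev G) s u x ∨ Dom (Rev G) s u y
    · exact hsep (sConn_delVertex_rev.mp
        (sConn_delVertex_of_dom_hNca hlpR (not_not.mp fun h => hcondDR ⟨hDR, h⟩) hwR))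
    rw [not_or] at hD hDR
    exact hsep (sConn_delVertex_of_not_dom hD.1 hD.2 hDR.1 hDR.2)
  · rintro (⟨hD, hnw⟩ | ⟨hD, hnw⟩) hsc
    · exact hnw (dom_hNca_of_sConn_delVertex hlp hx hy hsc hw hD)
    · exact hnw (dom_hNca_of_sConn_delVertex hlpR hx hy (sConn_delVertex_rev.mpr hsc) hwR hD)

/-- A strong articulation point `u` separates `x` and `y` iff `u` is an ancestor of
`x` or `y` in `D` and the nearest common ancestor `w` of `x,y` in `H` is not a proper
descendant of `u` in `D`, or the symmetric condition holds in the reverse graph. -/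
theorem stmt19 (G : V → V → Prop) (hG : StronglyConnected G) (s u x y : V)
    (hsap : IsStrongArticulationPoint G u)
    (hx : x ≠ u) (hy : y ≠ u)
    (T : DFSTree G s) (TR : DFSTree (Rev G) s)
    (hp hpR : V → V)
    (hlp : IsLoopParent G s T.Anc hp) (hlpR : IsLoopParent (Rev G) s TR.Anc hpR)
    (w wR : V) (hw : HNca hp x y w) (hwR : HNca hpR x y wR) :
    ¬ SConn (DelVertex G u) x y ↔
      ((Dom G s u x ∨ Dom G s u y) ∧ ¬ (Dom G s u w ∧ w ≠ u)) ∨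
        ((Dom (Rev G) s u x ∨ Dom (Rev G) s u y) ∧ ¬ (Dom (Rev G) s u wR ∧ wR ≠ u)) :=
  stmt19_general G s u x y hx hy T TR hp hpR hlp hlpR w wR hw hwR

end StrongConn
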